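/- arXiv:1508.00023 — 2 statements merged into one kernel-verified Lean document; each statement's English description precedes it below -/
import Mathlib

section
/- The outer bound via flow conservation: under any allocation policy, if there exists a subset J of job types and a skill s such that Σ_{j∈J} λ_j·r_{j,s} > Σ_{l∈N(J)} Σ_{i} μ^l_i·h^l_{i,s}, then the expected number of unallocated (j,s)-tasks satisfies limsup_{t→∞} E[Σ_{j∈J} r_{j,s}·Q_{j,s}(t)] = ∞, so the system is unstable; hence the capacity region is contained in C^out_μ = { λ : ∀J ⊆ [N], ∀s, Σ_{j∈J} λ_j r_{j,s} ≤ Σ_{l∈N(J)} Σ_i μ^l_i h^l_{i,s} }. -/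
open MeasureTheory Filter

/-- Outer bound via flow conservation.  Under any allocation policy,
if a subset `J` of job types and a (fixed) skill are such that the required
skill-hour rate `Σ_{j∈J} λ_j r_j` exceeds the available rate
`Σ_{l∈N(J)} Σ_i μ^l_i h^l_i`, then
`limsup_t E[Σ_{j∈J} r_j Q_j(t)] = ∞`, i.e. the system is unstable; hence the
capacity region is contained in the outer region `C^out_μ`. -/
theorem outer_bound_instability
    {Jt Ct At Ω : Type*} [Fintype Jt] [Fintype Ct] [Fintype At] [MeasurableSpace Ω]
    (μ : Measure Ω) [IsProbabilityMeasure μ]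
    (J : Finset Jt) (NJ : Finset Ct)
    (r : Jt → ℝ) (hr : ∀ j, 0 ≤ r j)
    (h : Ct → At → ℝ) (hh : ∀ l i, 0 ≤ h l i)
    (lam : Jt → ℝ) (μm : Ct → At → ℝ)
    (Q A D : ℕ → Ω → Jt → ℝ) (U : ℕ → Ω → Ct → At → ℝ)
    (hQnn : ∀ t ω j, 0 ≤ Q t ω j)
    -- queue dynamics (unallocated tasks cannot decrease faster than allocations)
    (hdyn : ∀ t ω j, Q t ω j + A t ω j - D t ω j ≤ Q (t + 1) ω j)
    -- mean arrival and availability rates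
    (hA : ∀ t j, ∫ ω, A t ω j ∂μ = lam j)
    (hU : ∀ t l i, ∫ ω, U t ω l i ∂μ = μm l i)
    -- resource (flow-conservation) constraint of any feasible allocation
    (hres : ∀ t ω, ∑ j ∈ J, r j * D t ω j ≤ ∑ l ∈ NJ, ∑ i, h l i * U t ω l i)
    -- integrability
    (hintQ : ∀ t, Integrable (fun ω => ∑ j ∈ J, r j * Q t ω j) μ)
    (hintA : ∀ t j, Integrable (fun ω => A t ω j) μ)
    (hintD : ∀ t j, Integrable (fun ω => D t ω j) μ)
    (hintU : ∀ t l i, Integrable (fun ω => U t ω l i) μ)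
    -- the arrival rate violates the outer-region inequality for (J, s)
    (hgap : ∑ l ∈ NJ, ∑ i, μm l i * h l i < ∑ j ∈ J, lam j * r j) :
    Filter.limsup
      (fun t : ℕ => ((∫ ω, ∑ j ∈ J, r j * Q t ω j ∂μ : ℝ) : EReal)) atTop = ⊤ := by
  set f : ℕ → ℝ := fun t => ∫ ω, ∑ j ∈ J, r j * Q t ω j ∂μ with hf
  set ε : ℝ := ∑ j ∈ J, lam j * r j - ∑ l ∈ NJ, ∑ i, μm l i * h l i with hε
  have hεpos : 0 < ε := by simpa [hε] using sub_pos.mpr hgap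
  -- integrability of sums
  have hintAr : ∀ t, Integrable (fun ω => ∑ j ∈ J, r j * A t ω j) μ := fun t =>
    integrable_finset_sum _ (fun j _ => ((hintA t j).const_mul _))
  have hintDr : ∀ t, Integrable (fun ω => ∑ j ∈ J, r j * D t ω j) μ := fun t =>
    integrable_finset_sum _ (fun j _ => ((hintD t j).const_mul _))
  have hintUr : ∀ t, Integrable (fun ω => ∑ l ∈ NJ, ∑ i, h l i * U t ω l i) μ := fun t =>
    integrable_finset_sum _ (fun l _ =>
      integrable_finset_sum _ (fun i _ => ((hintU t l i).const_mul _)))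
  -- one-step drift
  have hstep : ∀ t, f t + ε ≤ f (t + 1) := by
    intro t
    have h1 : ∀ ω, (∑ j ∈ J, r j * Q t ω j) + (∑ j ∈ J, r j * A t ω j)
        - (∑ l ∈ NJ, ∑ i, h l i * U t ω l i) ≤ ∑ j ∈ J, r j * Q (t + 1) ω j := by
      intro ω
      have h2 : (∑ j ∈ J, r j * Q t ω j) + (∑ j ∈ J, r j * A t ω j)
          - (∑ j ∈ J, r j * D t ω j) ≤ ∑ j ∈ J, r j * Q (t + 1) ω j := by
        rw [← Finset.sum_add_distrib, ← Finset.sum_sub_distrib]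
        refine Finset.sum_le_sum (fun j _ => ?_)
        have := hdyn t ω j
        calc r j * Q t ω j + r j * A t ω j - r j * D t ω j
            = r j * (Q t ω j + A t ω j - D t ω j) := by ring
          _ ≤ r j * Q (t + 1) ω j := mul_le_mul_of_nonneg_left this (hr j)
      linarith [hres t ω]
    have h3 : ∫ ω, ((∑ j ∈ J, r j * Q t ω j) + (∑ j ∈ J, r j * A t ω j)
        - (∑ l ∈ NJ, ∑ i, h l i * U t ω l i)) ∂μ ≤ f (t + 1) :=
      integral_mono (((hintQ t).add (hintAr t)).sub (hintUr t)) (hintQ (t + 1)) h1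
    have h4 : ∫ ω, ((∑ j ∈ J, r j * Q t ω j) + (∑ j ∈ J, r j * A t ω j)
        - (∑ l ∈ NJ, ∑ i, h l i * U t ω l i)) ∂μ = f t + ε := by
      have hQA : Integrable (fun ω => (∑ j ∈ J, r j * Q t ω j) + ∑ j ∈ J, r j * A t ω j) μ :=
        (hintQ t).add (hintAr t)
      rw [show (fun ω => ∑ j ∈ J, r j * Q t ω j + ∑ j ∈ J, r j * A t ω j
            - ∑ l ∈ NJ, ∑ i, h l i * U t ω l i)
          = (fun ω => ((∑ j ∈ J, r j * Q t ω j) + ∑ j ∈ J, r j * A t ω j)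
            - ∑ l ∈ NJ, ∑ i, h l i * U t ω l i) from rfl,
        integral_sub hQA (hintUr t), integral_add (hintQ t) (hintAr t)]
      have e1 : ∫ ω, ∑ j ∈ J, r j * A t ω j ∂μ = ∑ j ∈ J, lam j * r j := by
        rw [integral_finset_sum _ (fun j _ => (hintA t j).const_mul _)]
        refine Finset.sum_congr rfl (fun j _ => ?_)
        rw [integral_const_mul, hA, mul_comm]
      have e2 : ∫ ω, ∑ l ∈ NJ, ∑ i, h l i * U t ω l i ∂μ
          = ∑ l ∈ NJ, ∑ i, μm l i * h l i := by
        rw [integral_finset_sum _ (fun l _ =>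
          integrable_finset_sum _ (fun i _ => (hintU t l i).const_mul _))]
        refine Finset.sum_congr rfl (fun l _ => ?_)
        rw [integral_finset_sum _ (fun i _ => (hintU t l i).const_mul _)]
        refine Finset.sum_congr rfl (fun i _ => ?_)
        rw [integral_const_mul, hU, mul_comm]
      rw [e1, e2, hε, hf]
      ring
    linarith
  -- linear growth
  have hgrow : ∀ t : ℕ, f 0 + t * ε ≤ f t := by
    intro t
    induction t with
    | zero => simp
    | succ n ih =>
      have := hstep n
      push_cast
      nlinarith
  -- tendsto ⊤
  have htend : Tendsto (fun t : ℕ => ((f t : ℝ) : EReal)) atTop (nhds ⊤) := by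
    rw [EReal.tendsto_nhds_top_iff_real]
    intro x
    have hx : ∀ᶠ t : ℕ in atTop, x < f 0 + t * ε := by
      have : Tendsto (fun t : ℕ => f 0 + t * ε) atTop atTop := by
        apply tendsto_atTop_add_const_left
        exact Tendsto.atTop_mul_const hεpos tendsto_natCast_atTop_atTop
      exact this.eventually_gt_atTop x
    filter_upwards [hx] with t ht
    exact_mod_cast lt_of_lt_of_le ht (hgrow t)
  exact htend.limsup_eq
end

section
/- If λ ∉ closure of the capacity region C (a closed convex coordinate-convex subset of ℝ_+^N), then under any policy there exists a job type j with limsup_{t→∞} E[Q_j(t)] = ∞. Specifically, using the separating vector h ≥ 0 with h·λ ≥ h·ν + ε for all ν ∈ C̄, one gets E[h·Q(t+1)] ≥ E[h·Q(t)] + ε for all t, hence E[h·Q(t)] → ∞. -/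
open MeasureTheory Filter

/-- If the arrival rate `λ` lies outside the closure of the
capacity region `C` (a closed convex coordinate-convex subset of `ℝ_+^N`) then,
under any policy whose expected departure vector always lies in `closure C`,
some job type `j` has `limsup_t E[Q_j(t)] = ∞`. -/
theorem converse_instability_outside_capacity {N : ℕ} {Ω : Type*} [MeasurableSpace Ω]
    (μ : Measure Ω) [IsProbabilityMeasure μ]
    (C : Set (Fin N → ℝ)) (hconv : Convex ℝ C)
    (hpos : ∀ x ∈ C, ∀ i, 0 ≤ x i)
    (hdown : ∀ x ∈ C, ∀ y : Fin N → ℝ, (∀ i, 0 ≤ y i) → (∀ i, y i ≤ x i) → y ∈ C)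
    (lam : Fin N → ℝ) (hlam : ∀ i, 0 ≤ lam i) (hnot : lam ∉ closure C)
    (Q A Δ : ℕ → Ω → Fin N → ℝ)
    (hAnn : ∀ t ω j, 0 ≤ A t ω j)
    -- queue dynamics Q(t+1) = |Q(t) + A(t) − Δ(t)|⁺ componentwise
    (hdyn : ∀ t ω j, Q (t + 1) ω j = max (Q t ω j + A t ω j - Δ t ω j) 0)
    (hQ0nn : ∀ ω j, 0 ≤ Q 0 ω j)
    -- mean arrivals are λ and expected departures lie in the closed capacity region
    (hA : ∀ t j, ∫ ω, A t ω j ∂μ = lam j)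
    (hΔ : ∀ t, (fun j => ∫ ω, Δ t ω j ∂μ) ∈ closure C)
    -- integrability
    (hintQ : ∀ t j, Integrable (fun ω => Q t ω j) μ)
    (hintA : ∀ t j, Integrable (fun ω => A t ω j) μ)
    (hintΔ : ∀ t j, Integrable (fun ω => Δ t ω j) μ) :
    ∃ j : Fin N,
      Filter.limsup (fun t : ℕ => ((∫ ω, Q t ω j ∂μ : ℝ) : EReal)) atTop = ⊤ := by
  classical
  -- separation
  obtain ⟨f, u, hfu, hulam⟩ :=
    geometric_hahn_banach_closed_point (hconv.closure) isClosed_closure hnot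
  set h : Fin N → ℝ := fun j => f (Pi.single j 1) with hh
  have hf : ∀ x : Fin N → ℝ, f x = ∑ j, x j * h j := by
    intro x
    have hx : x = ∑ j, x j • (Pi.single j (1 : ℝ) : Fin N → ℝ) := by
      funext i
      simp [Finset.sum_apply, Pi.single_apply]
    conv_lhs => rw [hx]
    rw [map_sum]
    simp [smul_eq_mul]
    rfl
  set ε : ℝ := f lam - u with hε
  have hεpos : 0 < ε := by simp [hε]; linarith
  set g : (Fin N → ℝ) → ℝ := fun x => ∑ j, max (h j) 0 * x j with hg
  have hgcont : Continuous g := by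
    apply continuous_finset_sum
    intro j _
    exact (continuous_const.mul (continuous_apply j))
  have hglam : f lam ≤ g lam := by
    rw [hf]
    apply Finset.sum_le_sum
    intro j _
    rw [mul_comm]
    exact mul_le_mul_of_nonneg_right (le_max_left _ _) (hlam j)
  -- key separation for g on closure C
  have hgC : ∀ a ∈ closure C, g a ≤ g lam - ε := by
    have hsub : C ⊆ g ⁻¹' Set.Iic (g lam - ε) := by
      intro a ha
      set a' : Fin N → ℝ := fun j => if 0 ≤ h j then a j else 0 with ha'
      have ha'C : a' ∈ C := by
        apply hdown a ha
        · intro i; by_cases hi : 0 ≤ h i <;> simp [ha', hi, hpos a ha i]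
        · intro i; by_cases hi : 0 ≤ h i <;> simp [ha', hi, hpos a ha i]
      have hga : g a = f a' := by
        rw [hf]
        apply Finset.sum_congr rfl
        intro j _
        by_cases hj : 0 ≤ h j
        · simp [ha', hj, max_eq_left hj, mul_comm]
        · simp [ha', hj, max_eq_right (le_of_not_ge hj)]
      have := hfu a' (subset_closure ha'C)
      simp only [Set.mem_preimage, Set.mem_Iic]
      rw [hga]
      have : f a' ≤ u := le_of_lt this
      linarith
    have hclosed : IsClosed (g ⁻¹' Set.Iic (g lam - ε)) :=
      IsClosed.preimage hgcont isClosed_Iic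
    intro a ha
    exact closure_minimal hsub hclosed ha
  -- mean dynamics
  set m : ℕ → Fin N → ℝ := fun t j => ∫ ω, Q t ω j ∂μ with hm
  set d : ℕ → Fin N → ℝ := fun t j => ∫ ω, Δ t ω j ∂μ with hd
  have hrec : ∀ t j, m t j + lam j - d t j ≤ m (t + 1) j := by
    intro t j
    have hle : ∀ ω, Q t ω j + A t ω j - Δ t ω j ≤ Q (t + 1) ω j := by
      intro ω; rw [hdyn]; exact le_max_left _ _
    have hint1 : Integrable (fun ω => Q t ω j + A t ω j - Δ t ω j) μ :=
      ((hintQ t j).add (hintA t j)).sub (hintΔ t j)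
    have hmono := integral_mono hint1 (hintQ (t + 1) j) hle
    have e1 : (∫ ω, Q t ω j + A t ω j - Δ t ω j ∂μ)
        = (∫ ω, Q t ω j + A t ω j ∂μ) - ∫ ω, Δ t ω j ∂μ :=
      integral_sub ((hintQ t j).add (hintA t j)) (hintΔ t j)
    have e2 : (∫ ω, Q t ω j + A t ω j ∂μ)
        = (∫ ω, Q t ω j ∂μ) + ∫ ω, A t ω j ∂μ :=
      integral_add (hintQ t j) (hintA t j)
    rw [e1, e2, hA] at hmono
    exact hmono
  set S : ℕ → ℝ := fun t => g (m t) with hS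
  have hstep : ∀ t, S t + ε ≤ S (t + 1) := by
    intro t
    have h1 : ∑ j, max (h j) 0 * (m t j + lam j - d t j) ≤ S (t + 1) := by
      apply Finset.sum_le_sum
      intro j _
      exact mul_le_mul_of_nonneg_left (hrec t j) (le_max_right _ _)
    have h2 : ∑ j, max (h j) 0 * (m t j + lam j - d t j)
        = S t + g lam - g (d t) := by
      simp only [hS, hg, mul_sub, mul_add, Finset.sum_sub_distrib, Finset.sum_add_distrib]
    have h3 : g (d t) ≤ g lam - ε := hgC _ (hΔ t)
    linarith
  have hlin : ∀ t : ℕ, S 0 + t * ε ≤ S t := by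
    intro t
    induction t with
    | zero => simp
    | succ n ih =>
      have := hstep n
      push_cast
      nlinarith
  -- conclusion by contradiction
  by_contra hcon
  push_neg at hcon
  have hbound : ∀ j : Fin N, ∃ c : ℝ, ∀ᶠ t in atTop, m t j ≤ c := by
    intro j
    have hne := hcon j
    have hlt : Filter.limsup (fun t : ℕ => ((m t j : ℝ) : EReal)) atTop < ⊤ :=
      lt_top_iff_ne_top.2 hne
    obtain ⟨c, hc1, _⟩ := EReal.lt_iff_exists_real_btwn.1 hlt
    refine ⟨c, ?_⟩
    have := Filter.eventually_lt_of_limsup_lt hc1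
    filter_upwards [this] with t ht
    exact_mod_cast le_of_lt ht
  choose c hc using hbound
  have hall : ∀ᶠ t in atTop, ∀ j, m t j ≤ c j := eventually_all.2 hc
  set B : ℝ := ∑ j, max (h j) 0 * c j with hB
  have hSB : ∀ᶠ t in atTop, S t ≤ B := by
    filter_upwards [hall] with t ht
    apply Finset.sum_le_sum
    intro j _
    exact mul_le_mul_of_nonneg_left (ht j) (le_max_right _ _)
  have htend : Tendsto (fun t : ℕ => S 0 + (t : ℝ) * ε) atTop atTop :=
    tendsto_atTop_add_const_left atTop (S 0)
      (Filter.Tendsto.atTop_mul_const hεpos (tendsto_natCast_atTop_atTop (R := ℝ)))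
  have hgt : ∀ᶠ t : ℕ in atTop, B < S 0 + (t : ℝ) * ε := htend.eventually_gt_atTop B
  obtain ⟨t, h1, h2⟩ := (hSB.and hgt).exists
  have := hlin t
  linarith
end
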